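/- arXiv:2504.14510 — 2 statements merged into one kernel-verified Lean document; each statement's English description precedes it below -/
import Mathlib

section
/- Let G=(V,E) be a finite connected weighted graph, λ > 0, f : V → ℝ, and suppose A ∈ ℝ and a function s : V → ℝ satisfy: L_λ(s) < 0 pointwise, L_λ(A) > 0 pointwise (where L_λ(u) = −Δu + λe^u(e^u−1) + f), and s < A on V. If u minimizes the functional J_λ(u) = (1/2)∫_V|∇u|² dμ + (λ/2)∫_V(e^u − 1)² dμ + ∫_V fu dμ over the compact set {u : s ≤ u ≤ A}, then s < u < A strictly on V; consequently u is a local minimum critical point of J_λ and solves Δu = λe^u(e^u − 1) + f. -/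
open Real Finset Filter Topology

variable {V : Type*}

/-- Graph Laplacian: Δu(x) = (1/μ x) Σ_y ω_{xy}(u(y) − u(x)); non-edges have weight 0. -/
noncomputable def glap [Fintype V] (μ : V → ℝ) (w : V → V → ℝ) (u : V → ℝ) (x : V) : ℝ :=
  (1 / μ x) * ∑ y, w x y * (u y - u x)

/-- Integral over the graph: ∫_V g dμ = Σ_x μ(x) g(x). -/
noncomputable def intg [Fintype V] (μ : V → ℝ) (g : V → ℝ) : ℝ := ∑ x, μ x * g x

/-- Dirichlet energy ∫_V |∇u|² dμ = (1/2) Σ_x Σ_y ω_{xy}(u(y) − u(x))². -/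
noncomputable def gradSq [Fintype V] (w : V → V → ℝ) (u : V → ℝ) : ℝ :=
  (1/2) * ∑ x, ∑ y, w x y * (u y - u x)^2

/-- Connectivity: any two vertices are joined by a finite chain of positive-weight edges. -/
def GConn (w : V → V → ℝ) : Prop :=
  ∀ x y : V, Relation.ReflTransGen (fun a b => 0 < w a b) x y

/-- Sup norm ‖u‖_∞. -/
noncomputable def supnorm [Fintype V] (u : V → ℝ) : ℝ := ⨆ x, |u x|

/-!
The first variation of `J_λ` at `u` in the direction `δ_{x₀}` is `μ(x₀) L_λ(u)(x₀)`, so at a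
minimizer over the box `s ≤ u ≤ A` one has `L_λ(u)(x₀) ≥ 0` wherever `u(x₀) < A` (push up) and
`L_λ(u)(x₀) ≤ 0` wherever `s(x₀) < u(x₀)` (push down). If `u` touched `A` at `x₀`, then
`Δu(x₀) ≤ 0 = ΔA`, hence `L_λ(u)(x₀) ≥ L_λ(A)(x₀) > 0`, contradicting the second sign; touching
`s` is excluded in the same way. So `u` lies in the open box, is a local minimizer, and both signs
together give `L_λ(u) = 0`.
-/

theorem IsMinOn.hasLineDerivAt_nonneg {E : Type*} [AddCommGroup E] [Module ℝ E] {F : E → ℝ}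
    {K : Set E} {a b : E} {F' : ℝ} (hmin : IsMinOn F K a) (hd : HasLineDerivAt ℝ F F' a b)
    (hK : ∀ᶠ t : ℝ in 𝓝[>] (0 : ℝ), a + t • b ∈ K) : 0 ≤ F' := by
  rw [HasLineDerivAt, hasDerivAt_iff_tendsto_slope] at hd
  refine ge_of_tendsto (hd.mono_left (nhdsGT_le_nhdsNE 0)) ?_
  filter_upwards [hK, self_mem_nhdsWithin] with t ht ht0
  rw [slope_def_field, zero_smul, add_zero]
  exact div_nonneg (sub_nonneg.2 (isMinOn_iff.1 hmin _ ht)) (by simpa using le_of_lt ht0)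

lemma hasDerivAt_add_smul_apply (u φ : V → ℝ) (x : V) :
    HasDerivAt (fun t : ℝ => (u + t • φ) x) (φ x) 0 := by
  simpa using ((hasDerivAt_id (0 : ℝ)).mul_const (φ x)).const_add (u x)

lemma add_smul_single_mem_pi_Icc [DecidableEq V] {lo hi u : V → ℝ}
    (hu : u ∈ Set.univ.pi fun x => Set.Icc (lo x) (hi x)) {x₀ : V} {a t : ℝ}
    (h : u x₀ + t * a ∈ Set.Icc (lo x₀) (hi x₀)) :
    u + t • (Pi.single x₀ a : V → ℝ) ∈ Set.univ.pi fun x => Set.Icc (lo x) (hi x) := by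
  have hupdate : u + t • (Pi.single x₀ a : V → ℝ) = Function.update u x₀ (u x₀ + t * a) := by
    ext x; rcases eq_or_ne x x₀ with rfl | hx <;> simp [*]
  rw [hupdate, Set.update_mem_pi_iff_of_mem hu]
  exact fun _ => h

section Variational

variable [Fintype V] (μ : V → ℝ) (w : V → V → ℝ) (l : ℝ) (f : V → ℝ)

noncomputable def energy (u : V → ℝ) : ℝ :=
  (1/2) * gradSq w u + (l/2) * intg μ (fun x => (exp (u x) - 1)^2) + intg μ (fun x => f x * u x)

noncomputable def eulerLagrange (u : V → ℝ) (x : V) : ℝ :=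
  -glap μ w u x + l * exp (u x) * (exp (u x) - 1) + f x

variable {μ w}

lemma mul_glap {x : V} (hx : μ x ≠ 0) (u : V → ℝ) :
    μ x * glap μ w u x = ∑ y, w x y * (u y - u x) := by
  rw [glap]; field_simp

lemma sum_sum_mul_sub_mul_sub (hμ : ∀ x, μ x ≠ 0) (hsymm : ∀ x y, w x y = w y x)
    (u φ : V → ℝ) :
    ∑ x, ∑ y, w x y * (u y - u x) * (φ y - φ x) = -2 * intg μ (fun x => glap μ w u x * φ x) := by
  have hswap : ∑ x, ∑ y, w x y * (u y - u x) * φ y = -∑ x, ∑ y, w x y * (u y - u x) * φ x := by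
    rw [Finset.sum_comm, ← Finset.sum_neg_distrib]
    refine Finset.sum_congr rfl fun x _ => ?_
    rw [← Finset.sum_neg_distrib]
    refine Finset.sum_congr rfl fun y _ => ?_
    rw [hsymm]; ring
  calc ∑ x, ∑ y, w x y * (u y - u x) * (φ y - φ x)
      = ∑ x, ∑ y, w x y * (u y - u x) * φ y - ∑ x, ∑ y, w x y * (u y - u x) * φ x := by
        simp only [mul_sub, Finset.sum_sub_distrib]
    _ = -2 * ∑ x, ∑ y, w x y * (u y - u x) * φ x := by rw [hswap]; ring
    _ = -2 * intg μ (fun x => glap μ w u x * φ x) := by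
        simp only [intg, ← mul_assoc, mul_glap (hμ _), Finset.sum_mul]

lemma hasDerivAt_intg {g : V → ℝ → ℝ} {g' : V → ℝ} {t : ℝ}
    (hg : ∀ x, HasDerivAt (g x) (g' x) t) :
    HasDerivAt (fun t => intg μ (fun x => g x t)) (intg μ g') t :=
  HasDerivAt.fun_sum fun x _ => (hg x).const_mul (μ x)

lemma hasLineDerivAt_gradSq (hμ : ∀ x, μ x ≠ 0) (hsymm : ∀ x y, w x y = w y x)
    (u φ : V → ℝ) :
    HasLineDerivAt ℝ (gradSq w) (-2 * intg μ (fun x => glap μ w u x * φ x)) u φ := by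
  rw [← sum_sum_mul_sub_mul_sub hμ hsymm]
  have hterm : ∀ x y, HasDerivAt (fun t : ℝ => w x y * ((u + t • φ) y - (u + t • φ) x) ^ 2)
      (2 * (w x y * (u y - u x) * (φ y - φ x))) 0 := fun x y =>
    ((((hasDerivAt_add_smul_apply u φ y).sub (hasDerivAt_add_smul_apply u φ x)).fun_pow 2).const_mul
      (w x y)).congr_deriv (by
        simp only [Nat.cast_ofNat, Pi.add_apply, Pi.smul_apply, smul_eq_mul, Pi.sub_apply,
          zero_mul, add_zero, Nat.add_one_sub_one, pow_one]
        ring)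
  exact ((HasDerivAt.fun_sum fun x _ => HasDerivAt.fun_sum fun y _ => hterm x y).const_mul
    (1/2 : ℝ)).congr_deriv (by simp only [← Finset.mul_sum]; ring)

lemma hasLineDerivAt_energy (hμ : ∀ x, μ x ≠ 0) (hsymm : ∀ x y, w x y = w y x)
    (u φ : V → ℝ) :
    HasLineDerivAt ℝ (energy μ w l f) (intg μ (fun x => eulerLagrange μ w l f u x * φ x)) u φ := by
  have hexp : ∀ x, HasDerivAt (fun t : ℝ => (exp ((u + t • φ) x) - 1) ^ 2)
      (2 * (exp (u x) - 1) * exp (u x) * φ x) 0 := fun x =>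
    (((hasDerivAt_add_smul_apply u φ x).exp.sub_const 1).fun_pow 2).congr_deriv (by
      simp only [Nat.cast_ofNat, zero_smul, add_zero, Nat.add_one_sub_one, pow_one]
      ring)
  have hlin : ∀ x, HasDerivAt (fun t : ℝ => f x * (u + t • φ) x) (f x * φ x) 0 := fun x =>
    (hasDerivAt_add_smul_apply u φ x).const_mul (f x)
  refine ((((hasLineDerivAt_gradSq hμ hsymm u φ).const_mul (1/2 : ℝ)).add
    ((hasDerivAt_intg hexp).const_mul (l/2))).add (hasDerivAt_intg hlin)).congr_deriv ?_
  simp only [intg, eulerLagrange, Finset.mul_sum, ← Finset.sum_add_distrib]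
  refine Finset.sum_congr rfl fun x _ => ?_
  ring

end Variational

section Comparison

variable [Fintype V] {μ : V → ℝ} {w : V → V → ℝ} {u v : V → ℝ} {x₀ : V}

lemma glap_le_glap_of_le_of_eq (hμ : 0 < μ x₀) (hw : ∀ y, 0 ≤ w x₀ y) (huv : u ≤ v)
    (hx₀ : u x₀ = v x₀) : glap μ w u x₀ ≤ glap μ w v x₀ := by
  rw [glap, glap, hx₀]
  gcongr with y
  · exact hw y
  · exact huv y

lemma eulerLagrange_le_of_le_of_eq (l : ℝ) (f : V → ℝ) (hμ : 0 < μ x₀) (hw : ∀ y, 0 ≤ w x₀ y)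
    (huv : u ≤ v) (hx₀ : u x₀ = v x₀) :
    eulerLagrange μ w l f v x₀ ≤ eulerLagrange μ w l f u x₀ := by
  have := glap_le_glap_of_le_of_eq hμ hw huv hx₀
  simp only [eulerLagrange, hx₀]
  linarith

end Comparison

lemma exists_pos_forall_abs_sub_lt_mem [Fintype V] {U : Set (V → ℝ)} (hU : IsOpen U)
    {u : V → ℝ} (hu : u ∈ U) : ∃ ε > 0, ∀ v : V → ℝ, (∀ x, |v x - u x| < ε) → v ∈ U := by
  obtain ⟨ε, hε, hball⟩ := Metric.isOpen_iff.1 hU u hu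
  exact ⟨ε, hε, fun v hv =>
    hball ((dist_pi_lt_iff hε).2 fun x => by simpa [Real.dist_eq] using hv x)⟩

section Minimizer

variable [Fintype V] {μ : V → ℝ} {w : V → V → ℝ} {l : ℝ} {f : V → ℝ} {lo hi u : V → ℝ}

lemma intg_mul_single [DecidableEq V] (g : V → ℝ) (x₀ : V) (a : ℝ) :
    intg μ (fun x => g x * (Pi.single x₀ a : V → ℝ) x) = μ x₀ * g x₀ * a := by
  simp [intg, Pi.single_apply, mul_assoc]

lemma eulerLagrange_nonneg_of_lt_upper (hμ : ∀ x, 0 < μ x) (hsymm : ∀ x y, w x y = w y x)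
    (hmin : IsMinOn (energy μ w l f) (Set.univ.pi fun x => Set.Icc (lo x) (hi x)) u)
    (hu : u ∈ Set.univ.pi fun x => Set.Icc (lo x) (hi x)) {x₀ : V} (hx₀ : u x₀ < hi x₀) :
    0 ≤ eulerLagrange μ w l f u x₀ := by
  classical
  have hd := hasLineDerivAt_energy l f (fun x => (hμ x).ne') hsymm u (Pi.single x₀ 1)
  have h := hmin.hasLineDerivAt_nonneg hd <| by
    filter_upwards [Ioo_mem_nhdsGT (sub_pos.2 hx₀)] with t ht
    exact add_smul_single_mem_pi_Icc hu ⟨by linarith [(hu x₀ trivial).1, ht.1], by linarith [ht.2]⟩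
  rw [intg_mul_single, mul_one] at h
  exact (mul_nonneg_iff_of_pos_left (hμ x₀)).1 h

lemma eulerLagrange_nonpos_of_lower_lt (hμ : ∀ x, 0 < μ x) (hsymm : ∀ x y, w x y = w y x)
    (hmin : IsMinOn (energy μ w l f) (Set.univ.pi fun x => Set.Icc (lo x) (hi x)) u)
    (hu : u ∈ Set.univ.pi fun x => Set.Icc (lo x) (hi x)) {x₀ : V} (hx₀ : lo x₀ < u x₀) :
    eulerLagrange μ w l f u x₀ ≤ 0 := by
  classical
  have hd := hasLineDerivAt_energy l f (fun x => (hμ x).ne') hsymm u (Pi.single x₀ (-1))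
  have h := hmin.hasLineDerivAt_nonneg hd <| by
    filter_upwards [Ioo_mem_nhdsGT (sub_pos.2 hx₀)] with t ht
    exact add_smul_single_mem_pi_Icc hu ⟨by linarith [ht.2], by linarith [(hu x₀ trivial).2, ht.1]⟩
  rw [intg_mul_single, mul_neg_one, neg_nonneg] at h
  exact nonpos_of_mul_nonpos_right h (hμ x₀)

end Minimizer

theorem stmt17_general [Fintype V] (μ : V → ℝ) (w : V → V → ℝ)
    (hμ : ∀ x, 0 < μ x) (hsymm : ∀ x y, w x y = w y x) (hnn : ∀ x y, 0 ≤ w x y)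
    (l : ℝ) (f : V → ℝ) (A : ℝ) (s : V → ℝ)
    (hsub : ∀ x, -glap μ w s x + l * Real.exp (s x) * (Real.exp (s x) - 1) + f x < 0)
    (hsup : ∀ x, 0 < -glap μ w (fun _ => A) x
        + l * Real.exp A * (Real.exp A - 1) + f x)
    (hsA : ∀ x, s x < A) (u : V → ℝ)
    (hu : ∀ x, s x ≤ u x ∧ u x ≤ A)
    (hmin : ∀ v : V → ℝ, (∀ x, s x ≤ v x ∧ v x ≤ A) →
      (1/2) * gradSq w u + (l/2) * intg μ (fun x => (Real.exp (u x) - 1)^2)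
        + intg μ (fun x => f x * u x)
      ≤ (1/2) * gradSq w v + (l/2) * intg μ (fun x => (Real.exp (v x) - 1)^2)
        + intg μ (fun x => f x * v x)) :
    (∀ x, s x < u x ∧ u x < A) ∧
    (∃ ε : ℝ, 0 < ε ∧ ∀ v : V → ℝ, (∀ x, |v x - u x| < ε) →
      (1/2) * gradSq w u + (l/2) * intg μ (fun x => (Real.exp (u x) - 1)^2)
        + intg μ (fun x => f x * u x)
      ≤ (1/2) * gradSq w v + (l/2) * intg μ (fun x => (Real.exp (v x) - 1)^2)
        + intg μ (fun x => f x * v x)) ∧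
    (∀ x, glap μ w u x = l * Real.exp (u x) * (Real.exp (u x) - 1) + f x) := by
  have hminK : IsMinOn (energy μ w l f)
      (Set.univ.pi fun x => Set.Icc (s x) ((fun _ => A) x)) u :=
    isMinOn_iff.2 fun v hv => hmin v fun x => hv x trivial
  have huK : u ∈ Set.univ.pi fun x => Set.Icc (s x) ((fun _ => A) x) := fun x _ => hu x
  have hlt : ∀ x, u x < A := fun x => by
    by_contra! hx
    have hux : u x = A := le_antisymm (hu x).2 hx
    have hneg := eulerLagrange_nonpos_of_lower_lt hμ hsymm hminK huK (hux ▸ hsA x)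
    have hcomp := eulerLagrange_le_of_le_of_eq l f (hμ x) (hnn x) (fun y => (hu y).2) hux
    exact (hsup x).not_ge (hcomp.trans hneg)
  have hgt : ∀ x, s x < u x := fun x => by
    by_contra! hx
    have hsx : s x = u x := le_antisymm (hu x).1 hx
    have hpos := eulerLagrange_nonneg_of_lt_upper hμ hsymm hminK huK (hlt x)
    have hcomp := eulerLagrange_le_of_le_of_eq l f (hμ x) (hnn x) (fun y => (hu y).1) hsx
    exact (hsub x).not_ge (hpos.trans hcomp)
  have hu_mem : u ∈ Set.univ.pi fun x => Set.Ioo (s x) A := fun x _ => ⟨hgt x, hlt x⟩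
  refine ⟨fun x => ⟨hgt x, hlt x⟩, ?_, fun x => ?_⟩
  · obtain ⟨ε, hε, hball⟩ := exists_pos_forall_abs_sub_lt_mem
      (isOpen_set_pi Set.finite_univ fun x _ => isOpen_Ioo) hu_mem
    exact ⟨ε, hε, fun v hv => hmin v fun x => Set.Ioo_subset_Icc_self (hball v hv x trivial)⟩
  · have hzero := le_antisymm (eulerLagrange_nonpos_of_lower_lt hμ hsymm hminK huK (hgt x))
      (eulerLagrange_nonneg_of_lt_upper hμ hsymm hminK huK (hlt x))
    rw [eulerLagrange] at hzero
    linarith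

/-- The truncated minimizer stays strictly between the sub-solution s and the
super-solution A, is a local minimum of J_λ, and solves the equation. -/
theorem stmt17 [Fintype V] [Nonempty V] (μ : V → ℝ) (w : V → V → ℝ)
    (hμ : ∀ x, 0 < μ x) (hsymm : ∀ x y, w x y = w y x) (hnn : ∀ x y, 0 ≤ w x y)
    (hconn : GConn w) (l : ℝ) (hlpos : 0 < l) (f : V → ℝ) (A : ℝ) (s : V → ℝ)
    (hsub : ∀ x, -glap μ w s x + l * Real.exp (s x) * (Real.exp (s x) - 1) + f x < 0)
    (hsup : ∀ x, 0 < -glap μ w (fun _ => A) x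
        + l * Real.exp A * (Real.exp A - 1) + f x)
    (hsA : ∀ x, s x < A) (u : V → ℝ)
    (hu : ∀ x, s x ≤ u x ∧ u x ≤ A)
    (hmin : ∀ v : V → ℝ, (∀ x, s x ≤ v x ∧ v x ≤ A) →
      (1/2) * gradSq w u + (l/2) * intg μ (fun x => (Real.exp (u x) - 1)^2)
        + intg μ (fun x => f x * u x)
      ≤ (1/2) * gradSq w v + (l/2) * intg μ (fun x => (Real.exp (v x) - 1)^2)
        + intg μ (fun x => f x * v x)) :
    (∀ x, s x < u x ∧ u x < A) ∧
    (∃ ε : ℝ, 0 < ε ∧ ∀ v : V → ℝ, (∀ x, |v x - u x| < ε) →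
      (1/2) * gradSq w u + (l/2) * intg μ (fun x => (Real.exp (u x) - 1)^2)
        + intg μ (fun x => f x * u x)
      ≤ (1/2) * gradSq w v + (l/2) * intg μ (fun x => (Real.exp (v x) - 1)^2)
        + intg μ (fun x => f x * v x)) ∧
    (∀ x, glap μ w u x = l * Real.exp (u x) * (Real.exp (u x) - 1) + f x) :=
  stmt17_general μ w hμ hsymm hnn l f A s hsub hsup hsA u hu hmin
end

section
/- Let G=(V,E) be a finite connected weighted graph, λ ∈ ℝ and f : V → ℝ with λ f̄ ≠ 0 (where f̄ is the mean of f). Then the functional J_λ(u) = (1/2)∫_V|∇u|² dμ + (λ/2)∫_V(e^u−1)² dμ + ∫_V fu dμ on X ≅ ℝ^ℓ satisfies the Palais–Smale condition at every level c ∈ ℝ: every sequence {u_k} with J_λ(u_k) → c and J_λ'(u_k) → 0 has a subsequence converging (uniformly on V) to a critical point of J_λ. -/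
open Real Finset Filter Topology

variable {V : Type*}

/-!
Integrating `DJ_λ(u_k) = −Δu_k + λe^{u_k}(e^{u_k} − 1) + f → 0` over `V` kills the Laplacian, so
`∫ e^{u_k}(e^{u_k} − 1) dμ → −∫ f dμ / λ ≠ 0`. Boundedness of these integrals bounds `max u_k`
from above, hence bounds `Δu_k`; their staying away from `0` bounds `max u_k` from below. On a
connected graph only constants are harmonic, so the oscillation of `u` is controlled by `‖Δu‖`
and `(u_k)` is eventually bounded in the finite-dimensional space `V → ℝ`. A convergent
subsequence then tends to a critical point by continuity of `DJ_λ`.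
-/

lemma supnorm_eq_norm [Fintype V] [Nonempty V] (u : V → ℝ) : supnorm u = ‖u‖ :=
  le_antisymm (ciSup_le fun x => norm_le_pi_norm u x)
    ((pi_norm_le_iff_of_nonempty u).2 fun x =>
      le_ciSup (f := fun x => |u x|) (Finite.bddAbove_range _) x)

section Laplacian

variable [Fintype V] (μ : V → ℝ) (w : V → V → ℝ)

noncomputable def glapLin : (V → ℝ) →ₗ[ℝ] V → ℝ where
  toFun := glap μ w
  map_add' u v := by
    funext x
    simp only [glap, Pi.add_apply, ← mul_add, ← sum_add_distrib]
    congr 1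
    exact sum_congr rfl fun y _ => by ring
  map_smul' c u := by
    funext x
    simp only [glap, Pi.smul_apply, smul_eq_mul, RingHom.id_apply, mul_sum]
    exact sum_congr rfl fun y _ => by ring

@[simp]
lemma glapLin_apply (u : V → ℝ) : glapLin μ w u = glap μ w u := rfl

@[simp]
lemma glap_const (c : ℝ) : glap μ w (fun _ => c) = 0 := by
  funext x
  simp [glap]

@[fun_prop]
lemma continuous_glap : Continuous (glap μ w) :=
  (glapLin μ w).continuous_of_finiteDimensional

lemma intg_glap (hμ : ∀ x, μ x ≠ 0) (hsymm : ∀ x y, w x y = w y x) (u : V → ℝ) :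
    intg μ (glap μ w u) = 0 := by
  have hanti : ∑ x, ∑ y, w x y * (u y - u x) = -∑ x, ∑ y, w x y * (u y - u x) := by
    conv_lhs => rw [sum_comm]
    rw [← sum_neg_distrib]
    refine sum_congr rfl fun x _ => ?_
    rw [← sum_neg_distrib]
    refine sum_congr rfl fun y _ => ?_
    rw [hsymm]
    ring
  simp only [intg, glap, ← mul_assoc, mul_one_div_cancel (hμ _), one_mul]
  linarith

lemma eq_of_glap_eq_zero (hμ : ∀ x, μ x ≠ 0) (hnn : ∀ x y, 0 ≤ w x y) (hconn : GConn w)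
    {u : V → ℝ} (hu : glap μ w u = 0) (x y : V) : u x = u y := by
  obtain ⟨x₀, -, hx₀⟩ := exists_max_image univ u ⟨x, mem_univ x⟩
  -- the maximum propagates along edges: `Δu = 0` at a maximum forces all neighbours to be maximal
  have step : ∀ a b, u a = u x₀ → 0 < w a b → u b = u x₀ := by
    intro a b ha hab
    have hsum : ∑ y, w a y * (u y - u a) = 0 := by
      simpa [glap, hμ a] using congrFun hu a
    have hterm : ∀ y ∈ univ, w a y * (u y - u a) ≤ 0 := fun y _ =>
      mul_nonpos_of_nonneg_of_nonpos (hnn a y) (by linarith [hx₀ y (mem_univ y)])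
    have hb := (sum_eq_zero_iff_of_nonpos hterm).1 hsum b (mem_univ b)
    rcases mul_eq_zero.1 hb with h | h
    · exact absurd h hab.ne'
    · linarith [sub_eq_zero.1 h]
  have hmax : ∀ y, u y = u x₀ := fun y => by
    induction hconn x₀ y with
    | refl => rfl
    | tail _ hbc ih => exact step _ _ ih hbc
  rw [hmax x, hmax y]

lemma exists_sub_le_mul_norm_glap [Nonempty V] (hμ : ∀ x, μ x ≠ 0) (hnn : ∀ x y, 0 ≤ w x y)
    (hconn : GConn w) : ∃ C, 0 ≤ C ∧ ∀ u : V → ℝ, ∀ x y, u x - u y ≤ C * ‖glap μ w u‖ := by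
  -- `u ↦ (Δu, u x₀)` is injective, hence antilipschitz; apply this to `u − u x₀`
  let x₀ := Classical.arbitrary V
  let L := (glapLin μ w).prod (LinearMap.proj x₀)
  have hL : LinearMap.ker L = ⊥ := by
    refine LinearMap.ker_eq_bot'.2 fun u hu => ?_
    have hΔ : glap μ w u = 0 := congrArg Prod.fst hu
    have hx₀ : u x₀ = 0 := congrArg Prod.snd hu
    funext x
    rw [eq_of_glap_eq_zero μ w hμ hnn hconn hΔ x x₀, hx₀, Pi.zero_apply]
  obtain ⟨K, -, hK⟩ := L.exists_antilipschitzWith hL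
  refine ⟨2 * K, by positivity, fun u x y => ?_⟩
  set v := u - fun _ => u x₀
  have hLv : L v = (glap μ w u, 0) := by
    simp [L, v, map_sub]
  have hv : ‖v‖ ≤ K * ‖glap μ w u‖ := by
    simpa [hLv] using hK.le_mul_norm (map_zero L) v
  calc u x - u y = v x - v y := by simp [v]
    _ ≤ ‖v‖ + ‖v‖ :=
        ((le_abs_self _).trans (abs_sub _ _)).trans
          (add_le_add (norm_le_pi_norm v x) (norm_le_pi_norm v y))
    _ ≤ 2 * K * ‖glap μ w u‖ := by linarith

end Laplacian

section Integral

variable [Fintype V] {μ : V → ℝ}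

lemma abs_intg_le (hμ : ∀ x, 0 ≤ μ x) {g : V → ℝ} {C : ℝ} (hg : ∀ x, |g x| ≤ C) :
    |intg μ g| ≤ (∑ x, μ x) * C := by
  calc |intg μ g| ≤ ∑ x, |μ x * g x| := abs_sum_le_sum_abs _ _
    _ ≤ ∑ x, μ x * C := sum_le_sum fun x _ => by
        rw [abs_mul, abs_of_nonneg (hμ x)]
        exact mul_le_mul_of_nonneg_left (hg x) (hμ x)
    _ = (∑ x, μ x) * C := by rw [sum_mul]

lemma mul_le_intg (hμ : ∀ x, 0 ≤ μ x) {g : V → ℝ} (hg : ∀ x, 0 ≤ g x) (x : V) :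
    μ x * g x ≤ intg μ g :=
  single_le_sum (f := fun x => μ x * g x) (fun z _ => mul_nonneg (hμ z) (hg z)) (mem_univ x)

lemma exp_le_of_intg_le (hμ : ∀ x, 0 < μ x) {u : V → ℝ} {B : ℝ}
    (hB : intg μ (fun x => exp (u x) * (exp (u x) - 1)) ≤ B) (x : V) :
    exp (u x) ≤ 1 + (B + (∑ z, μ z) / 4) / μ x := by
  -- `s(s − 1) + 1/4 = (s − 1/2)²` is nonnegative and dominates `s − 1`
  have hsq : ∀ z, 0 ≤ exp (u z) * (exp (u z) - 1) + 1 / 4 := fun z => by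
    nlinarith [sq_nonneg (exp (u z) - 1 / 2)]
  have hint : intg μ (fun z => exp (u z) * (exp (u z) - 1) + 1 / 4)
      = intg μ (fun z => exp (u z) * (exp (u z) - 1)) + (∑ z, μ z) / 4 := by
    simp only [intg, mul_add, sum_add_distrib, ← sum_mul]
    ring
  have hx := mul_le_intg (fun z => (hμ z).le) hsq x
  rw [← sub_le_iff_le_add', le_div_iff₀ (hμ x)]
  nlinarith [sq_nonneg (exp (u x) - 1), hμ x]

lemma exists_le_exp_of_lt_abs_intg (hμ : ∀ x, 0 ≤ μ x) {u : V → ℝ} {ε : ℝ} (hε : ε ≤ 1)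
    (h : (∑ x, μ x) * ε < |intg μ (fun x => exp (u x) * (exp (u x) - 1))|) :
    ∃ x, ε ≤ exp (u x) := by
  by_contra! hlt
  refine h.not_ge (abs_intg_le hμ fun x => abs_le.2 ⟨?_, ?_⟩) <;>
    nlinarith [exp_pos (u x), hlt x]

end Integral

lemma abs_le_of_exp_le {u : V → ℝ} {E ε D : ℝ} (hε : 0 < ε)
    (hE : ∀ x, exp (u x) ≤ E) {x₀ : V} (hx₀ : ε ≤ exp (u x₀)) (hD : ∀ x y, u x - u y ≤ D)
    (z : V) : |u z| ≤ |log E| + |log ε| + D := by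
  have hupper : u z ≤ log E := (le_log_iff_exp_le ((exp_pos _).trans_le (hE z))).2 (hE z)
  have hlower : log ε ≤ u x₀ := (log_le_iff_le_exp hε).2 hx₀
  have hD₀ : 0 ≤ D := by simpa using hD z z
  rw [abs_le]
  constructor <;> linarith [hD x₀ z, le_abs_self (log E), neg_abs_le (log ε), abs_nonneg (log E),
    abs_nonneg (log ε)]

section Functional

variable [Fintype V] (μ : V → ℝ) (w : V → V → ℝ) (l : ℝ) (f : V → ℝ)

noncomputable def gradJ (u : V → ℝ) (x : V) : ℝ :=
  -glap μ w u x + l * exp (u x) * (exp (u x) - 1) + f x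

lemma continuous_gradJ : Continuous (gradJ μ w l f) := by
  unfold gradJ
  fun_prop

variable {μ w l f}

lemma intg_gradJ (hμ : ∀ x, μ x ≠ 0) (hsymm : ∀ x y, w x y = w y x) (u : V → ℝ) :
    intg μ (gradJ μ w l f u)
      = l * intg μ (fun x => exp (u x) * (exp (u x) - 1)) + intg μ f := by
  have hΔ := intg_glap μ w hμ hsymm u
  simp only [intg, gradJ, mul_sum, ← sum_add_distrib] at hΔ ⊢
  rw [← sub_eq_zero, ← sum_sub_distrib, ← neg_eq_zero, ← hΔ, ← sum_neg_distrib]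
  exact sum_congr rfl fun x _ => by ring

lemma norm_glap_le [Nonempty V] {u : V → ℝ} {E : ℝ} (hE : ∀ x, exp (u x) ≤ E) :
    ‖glap μ w u‖ ≤ |l| * (E * (E + 1)) + ‖f‖ + ‖gradJ μ w l f u‖ := by
  have hN : ‖fun x => exp (u x) * (exp (u x) - 1)‖ ≤ E * (E + 1) := by
    refine (pi_norm_le_iff_of_nonempty _).2 fun x => abs_le.2 ⟨?_, ?_⟩ <;>
      nlinarith [exp_pos (u x), hE x]
  have hΔ : glap μ w u = l • (fun x => exp (u x) * (exp (u x) - 1)) + f - gradJ μ w l f u := by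
    funext x
    simp only [gradJ, Pi.add_apply, Pi.sub_apply, Pi.smul_apply, smul_eq_mul]
    ring
  calc ‖glap μ w u‖
      ≤ ‖l • (fun x => exp (u x) * (exp (u x) - 1))‖ + ‖f‖ + ‖gradJ μ w l f u‖ := by
        rw [hΔ]
        exact (norm_sub_le _ _).trans (by gcongr; exact norm_add_le _ _)
    _ ≤ |l| * (E * (E + 1)) + ‖f‖ + ‖gradJ μ w l f u‖ := by
        rw [norm_smul, Real.norm_eq_abs]
        gcongr

lemma gradJ_eq_zero_of_tendsto {u : ℕ → V → ℝ} {u₀ : V → ℝ} (hu : Tendsto u atTop (𝓝 u₀))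
    (hgrad : Tendsto (fun k => ‖gradJ μ w l f (u k)‖) atTop (𝓝 0)) : gradJ μ w l f u₀ = 0 :=
  tendsto_nhds_unique ((continuous_gradJ μ w l f).tendsto u₀ |>.comp hu)
    (tendsto_zero_iff_norm_tendsto_zero.2 hgrad)

end Functional

section Sequence

variable [Fintype V] {μ : V → ℝ} {w : V → V → ℝ} {l : ℝ} {f : V → ℝ} {u : ℕ → V → ℝ}

lemma tendsto_intg_of_tendsto_gradJ (hμ : ∀ x, 0 < μ x) (hsymm : ∀ x y, w x y = w y x)
    (hl : l ≠ 0) (hgrad : Tendsto (fun k => ‖gradJ μ w l f (u k)‖) atTop (𝓝 0)) :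
    Tendsto (fun k => intg μ (fun x => exp (u k x) * (exp (u k x) - 1))) atTop
      (𝓝 (-intg μ f / l)) := by
  have hint : Tendsto (fun k => intg μ (gradJ μ w l f (u k))) atTop (𝓝 0) :=
    squeeze_zero_norm
      (fun k => abs_intg_le (fun x => (hμ x).le) (norm_le_pi_norm (gradJ μ w l f (u k))))
      (by simpa using hgrad.const_mul (∑ x, μ x))
  have hlim := (hint.sub_const (intg μ f)).div_const l
  rw [zero_sub] at hlim
  refine hlim.congr fun k => ?_
  rw [intg_gradJ (fun x => (hμ x).ne') hsymm]
  field_simp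
  ring

lemma exists_exp_le_of_bddAbove [Nonempty V] (hμ : ∀ x, 0 < μ x)
    (hI : BddAbove (Set.range fun k => intg μ (fun x => exp (u k x) * (exp (u k x) - 1)))) :
    ∃ E, ∀ k x, exp (u k x) ≤ E := by
  obtain ⟨B, hB⟩ := hI
  obtain ⟨x₁, hx₁⟩ := Finite.exists_max fun x => 1 + (B + (∑ z, μ z) / 4) / μ x
  exact ⟨_, fun k x => (exp_le_of_intg_le hμ (hB ⟨k, rfl⟩) x).trans (hx₁ x)⟩

lemma eventually_exists_le_exp [Nonempty V] (hμ : ∀ x, 0 < μ x) {A : ℝ} (hA : A ≠ 0)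
    (hI : Tendsto (fun k => intg μ (fun x => exp (u k x) * (exp (u k x) - 1))) atTop (𝓝 A)) :
    ∃ ε > 0, ∀ᶠ k in atTop, ∃ x, ε ≤ exp (u k x) := by
  have hμV : 0 < ∑ x, μ x := sum_pos (fun x _ => hμ x) univ_nonempty
  set ε := min 1 (|A| / (2 * ∑ x, μ x))
  have hεA : (∑ x, μ x) * ε ≤ |A| / 2 := by
    calc (∑ x, μ x) * ε ≤ (∑ x, μ x) * (|A| / (2 * ∑ x, μ x)) := by gcongr; exact min_le_right _ _
      _ = |A| / 2 := by field_simp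
  refine ⟨ε, lt_min one_pos (by positivity), ?_⟩
  filter_upwards [hI.abs.eventually_const_lt (half_lt_self (abs_pos.2 hA))] with k hk
  exact exists_le_exp_of_lt_abs_intg (fun x => (hμ x).le) (min_le_left _ _) (hεA.trans_lt hk)

lemma eventually_norm_le_of_tendsto_gradJ [Nonempty V] (hμ : ∀ x, 0 < μ x)
    (hsymm : ∀ x y, w x y = w y x) (hnn : ∀ x y, 0 ≤ w x y) (hconn : GConn w) (hl : l ≠ 0)
    (hf : intg μ f ≠ 0) (hgrad : Tendsto (fun k => ‖gradJ μ w l f (u k)‖) atTop (𝓝 0)) :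
    ∃ R, ∀ᶠ k in atTop, ‖u k‖ ≤ R := by
  have hI := tendsto_intg_of_tendsto_gradJ hμ hsymm hl hgrad
  obtain ⟨E, hE⟩ := exists_exp_le_of_bddAbove hμ hI.bddAbove_range
  obtain ⟨ε, hε, hεu⟩ := eventually_exists_le_exp hμ (by simp [hl, hf]) hI
  obtain ⟨G, hG⟩ := hgrad.bddAbove_range
  obtain ⟨C, hC₀, hC⟩ := exists_sub_le_mul_norm_glap μ w (fun x => (hμ x).ne') hnn hconn
  refine ⟨|log E| + |log ε| + C * (|l| * (E * (E + 1)) + ‖f‖ + G), ?_⟩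
  filter_upwards [hεu] with k ⟨x₀, hx₀⟩
  refine (pi_norm_le_iff_of_nonempty _).2 fun z => abs_le_of_exp_le hε (hE k) hx₀ (fun x y => ?_) z
  calc u k x - u k y ≤ C * ‖glap μ w (u k)‖ := hC _ x y
    _ ≤ C * (|l| * (E * (E + 1)) + ‖f‖ + G) := by
        gcongr
        exact (norm_glap_le (hE k)).trans (by gcongr; exact hG ⟨k, rfl⟩)

end Sequence
theorem stmt19_general [Fintype V] (μ : V → ℝ) (w : V → V → ℝ)
    (hμ : ∀ x, 0 < μ x) (hsymm : ∀ x y, w x y = w y x) (hnn : ∀ x y, 0 ≤ w x y)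
    (hconn : GConn w) (l : ℝ) (f : V → ℝ)
    (hlf : l * ((1 / ∑ x, μ x) * intg μ f) ≠ 0) :
    ∀ c : ℝ, ∀ u : ℕ → V → ℝ,
      Filter.Tendsto (fun k => (1/2) * gradSq w (u k)
          + (l/2) * intg μ (fun x => (Real.exp (u k x) - 1)^2)
          + intg μ (fun x => f x * u k x)) Filter.atTop (nhds c) →
      Filter.Tendsto (fun k => supnorm (fun x =>
          -glap μ w (u k) x + l * Real.exp (u k x) * (Real.exp (u k x) - 1) + f x))
        Filter.atTop (nhds 0) →
      ∃ ustar : V → ℝ,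
        (∀ x, -glap μ w ustar x
            + l * Real.exp (ustar x) * (Real.exp (ustar x) - 1) + f x = 0) ∧
        ∃ φ : ℕ → ℕ, StrictMono φ ∧
          Filter.Tendsto (fun k => supnorm (fun x => u (φ k) x - ustar x))
            Filter.atTop (nhds 0) := by
  intro c u _ hDJ
  obtain ⟨hl, -, hf⟩ : l ≠ 0 ∧ 1 / ∑ x, μ x ≠ 0 ∧ intg μ f ≠ 0 := by
    simpa only [mul_ne_zero_iff] using hlf
  have : Nonempty V := by
    by_contra hV
    exact hf (by simp [intg, not_nonempty_iff.1 hV])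
  have hgrad : Tendsto (fun k => ‖gradJ μ w l f (u k)‖) atTop (𝓝 0) := by
    simp only [← supnorm_eq_norm]
    exact hDJ
  obtain ⟨R, hR⟩ := eventually_norm_le_of_tendsto_gradJ hμ hsymm hnn hconn hl hf hgrad
  obtain ⟨ustar, -, φ, hφ, hlim⟩ := tendsto_subseq_of_frequently_bounded
    (Metric.isBounded_closedBall (x := 0) (r := R))
    (hR.mono fun k hk => mem_closedBall_zero_iff.2 hk).frequently
  refine ⟨ustar, congrFun (gradJ_eq_zero_of_tendsto hlim (hgrad.comp hφ.tendsto_atTop)), φ, hφ, ?_⟩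
  simp only [supnorm_eq_norm]
  exact tendsto_iff_norm_sub_tendsto_zero.1 hlim

/-- The Palais–Smale condition for J_λ when λ f̄ ≠ 0. -/
theorem stmt19 [Fintype V] [Nonempty V] (μ : V → ℝ) (w : V → V → ℝ)
    (hμ : ∀ x, 0 < μ x) (hsymm : ∀ x y, w x y = w y x) (hnn : ∀ x y, 0 ≤ w x y)
    (hconn : GConn w) (l : ℝ) (f : V → ℝ)
    (hlf : l * ((1 / ∑ x, μ x) * intg μ f) ≠ 0) :
    ∀ c : ℝ, ∀ u : ℕ → V → ℝ,
      Filter.Tendsto (fun k => (1/2) * gradSq w (u k)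
          + (l/2) * intg μ (fun x => (Real.exp (u k x) - 1)^2)
          + intg μ (fun x => f x * u k x)) Filter.atTop (nhds c) →
      Filter.Tendsto (fun k => supnorm (fun x =>
          -glap μ w (u k) x + l * Real.exp (u k x) * (Real.exp (u k x) - 1) + f x))
        Filter.atTop (nhds 0) →
      ∃ ustar : V → ℝ,
        (∀ x, -glap μ w ustar x
            + l * Real.exp (ustar x) * (Real.exp (ustar x) - 1) + f x = 0) ∧
        ∃ φ : ℕ → ℕ, StrictMono φ ∧
          Filter.Tendsto (fun k => supnorm (fun x => u (φ k) x - ustar x))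
            Filter.atTop (nhds 0) :=
  stmt19_general μ w hμ hsymm hnn hconn l f hlf
end
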